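/- arXiv:2110.05401 — 10 statements merged into one kernel-verified Lean document; each statement's English description precedes it below -/
import Mathlib

section
/- Let m be a nonnegative integer such that the Fermat number F_m = 2^(2^m) + 1 is prime, and let k be an even positive integer with gcd(F_m, k) = 1. Then n = 2^(2^m)·k satisfies φ(n+k) = φ(n), where φ denotes Euler's totient function. -/
open scoped Nat

theorem Nat.totient_pow_mul_of_prime_of_dvd {p n : ℕ} (hp : p.Prime) (h : p ∣ n) (a : ℕ) :
    φ (p ^ a * n) = p ^ a * φ n := by
  induction a with
  | zero => simp
  | succ a ih =>
    calc φ (p ^ (a + 1) * n) = φ (p * (p ^ a * n)) := by rw [pow_succ', mul_assoc]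
      _ = p * φ (p ^ a * n) := Nat.totient_mul_of_prime_of_dvd hp (h.mul_left _)
      _ = p ^ (a + 1) * φ n := by rw [ih]; ring

theorem fermat_prime_solution_even_k_general
    (m k : ℕ) (hF : Nat.Prime (2 ^ 2 ^ m + 1))
    (hke : Even k) (hcop : Nat.gcd (2 ^ 2 ^ m + 1) k = 1) :
    Nat.totient (2 ^ 2 ^ m * k + k) = Nat.totient (2 ^ 2 ^ m * k) := by
  calc φ (2 ^ 2 ^ m * k + k) = φ ((2 ^ 2 ^ m + 1) * k) := by rw [add_one_mul]
    _ = 2 ^ 2 ^ m * φ k := by rw [Nat.totient_mul hcop, Nat.totient_prime hF, Nat.add_sub_cancel]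
    _ = φ (2 ^ 2 ^ m * k) :=
      (Nat.totient_pow_mul_of_prime_of_dvd Nat.prime_two hke.two_dvd _).symm

theorem fermat_prime_solution_even_k
    (m k : ℕ) (hF : Nat.Prime (2 ^ 2 ^ m + 1))
    (hk : 0 < k) (hke : Even k) (hcop : Nat.gcd (2 ^ 2 ^ m + 1) k = 1) :
    Nat.totient (2 ^ 2 ^ m * k + k) = Nat.totient (2 ^ 2 ^ m * k) :=
  fermat_prime_solution_even_k_general m k hF hke hcop
end

section
/- Let m be a nonnegative integer such that the Fermat number F_m = 2^(2^m) + 1 is prime, and let k be an odd positive integer with gcd(F_m, k) = 1. Then n = 2^(2^m)·k satisfies φ(n+k) = 2·φ(n), where φ denotes Euler's totient function. -/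
theorem fermat_prime_solution_odd_k
    (m k : ℕ) (hF : Nat.Prime (2 ^ 2 ^ m + 1))
    (hk : 0 < k) (hko : Odd k) (hcop : Nat.gcd (2 ^ 2 ^ m + 1) k = 1) :
    Nat.totient (2 ^ 2 ^ m * k + k) = 2 * Nat.totient (2 ^ 2 ^ m * k) := by
  have h1 : 2 ^ 2 ^ m * k + k = (2 ^ 2 ^ m + 1) * k := by ring
  have hc2 : Nat.Coprime 2 k := Nat.coprime_two_left.mpr hko
  have hc : Nat.Coprime (2 ^ 2 ^ m) k := hc2.pow_left _
  rw [h1, Nat.totient_mul hcop, Nat.totient_prime hF, Nat.totient_mul hc,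
    Nat.totient_prime_pow Nat.prime_two (Nat.pow_pos two_pos)]
  have h2 : 2 ^ 2 ^ m = 2 * 2 ^ (2 ^ m - 1) := by
    have h3 : 2 ^ m - 1 + 1 = 2 ^ m := Nat.succ_pred_eq_of_pos (Nat.pow_pos two_pos)
    conv_lhs => rw [← h3]
    rw [pow_succ']
  rw [h2, Nat.add_sub_cancel]
  ring
end

section
/- Let m be a nonnegative integer such that the Fermat number F_m = 2^(2^m) + 1 is prime, let k be an odd positive integer divisible by F_m, and let r be a positive integer such that both (F_m − 1)·r + 1 and F_m·r + 1 are prime and neither of them divides k. Then n = (F_m − 1)·(F_m·r + 1)·k satisfies φ(n+k) = 2·φ(n), where φ denotes Euler's totient function. -/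
/-!
Write `q = 2 ^ 2 ^ m`, `p = q * r + 1` and `p' = (q + 1) * r + 1`. Then `n + k = p * ((q + 1) * k)`
and `n = q * p' * k`. Since `q + 1 ∣ k`, `φ ((q + 1) * k) = (q + 1) * φ k`, so
`φ (n + k) = q * r * (q + 1) * φ k`, while `p'` is coprime to `q * k` and `q` to the odd `k`, so
`φ n = φ q * (q + 1) * r * φ k`. Everything then reduces to `2 * φ q = q` for a power of two.
-/

open Nat

theorem Nat.totient_mul_of_dvd {a b : ℕ} (h : a ∣ b) : φ (a * b) = a * φ b := by
  rcases eq_or_ne a 0 with rfl | ha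
  · simp
  have key := totient_gcd_mul_totient_mul a b
  rw [gcd_eq_left h, mul_assoc] at key
  simpa [(totient_pos.2 (Nat.pos_of_ne_zero ha)).ne', mul_comm] using key

theorem Nat.two_mul_totient_two_pow {n : ℕ} (hn : n ≠ 0) : 2 * φ (2 ^ n) = 2 ^ n := by
  obtain ⟨n, rfl⟩ := exists_eq_succ_of_ne_zero hn
  rw [totient_prime_pow_succ prime_two, pow_succ]
  ring

section

variable {a k r : ℕ}

theorem totient_mul_succ_mul_add_self (hdvd : a + 1 ∣ k) (hp : (a * r + 1).Prime)
    (hnd : ¬ a * r + 1 ∣ k) :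
    φ (a * ((a + 1) * r + 1) * k + k) = a * r * ((a + 1) * φ k) := by
  have hcop : Coprime (a * r + 1) ((a + 1) * k) :=
    Coprime.mul_right ((hp.coprime_iff_not_dvd).2 fun h => hnd (h.trans hdvd))
      ((hp.coprime_iff_not_dvd).2 hnd)
  rw [show a * ((a + 1) * r + 1) * k + k = (a * r + 1) * ((a + 1) * k) by ring,
    totient_mul hcop, totient_prime hp, Nat.add_sub_cancel, totient_mul_of_dvd hdvd]

theorem totient_mul_succ_mul (ha : 0 < a) (hak : Coprime a k) (hp : ((a + 1) * r + 1).Prime)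
    (hnd : ¬ (a + 1) * r + 1 ∣ k) :
    φ (a * ((a + 1) * r + 1) * k) = φ a * ((a + 1) * r) * φ k := by
  have hr : r ≠ 0 := by
    rintro rfl
    exact not_prime_one (by simpa using hp)
  have hpa : ¬ (a + 1) * r + 1 ∣ a := fun h => by
    have := Nat.le_of_dvd ha h
    have : 1 ≤ r := Nat.one_le_iff_ne_zero.2 hr
    nlinarith
  have hcop : Coprime ((a + 1) * r + 1) (a * k) :=
    Coprime.mul_right ((hp.coprime_iff_not_dvd).2 hpa) ((hp.coprime_iff_not_dvd).2 hnd)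
  rw [show a * ((a + 1) * r + 1) * k = ((a + 1) * r + 1) * (a * k) by ring,
    totient_mul hcop, totient_prime hp, Nat.add_sub_cancel, totient_mul hak]
  ring

end

theorem fermat_prime_solution_odd_k_dvd_general
    (m k r : ℕ)
    (hko : Odd k) (hdvd : (2 ^ 2 ^ m + 1) ∣ k)
    (hp1 : Nat.Prime (2 ^ 2 ^ m * r + 1))
    (hp2 : Nat.Prime ((2 ^ 2 ^ m + 1) * r + 1))
    (hnd1 : ¬ (2 ^ 2 ^ m * r + 1) ∣ k)
    (hnd2 : ¬ ((2 ^ 2 ^ m + 1) * r + 1) ∣ k) :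
    Nat.totient (2 ^ 2 ^ m * ((2 ^ 2 ^ m + 1) * r + 1) * k + k) =
      2 * Nat.totient (2 ^ 2 ^ m * ((2 ^ 2 ^ m + 1) * r + 1) * k) := by
  have hcop : Coprime (2 ^ 2 ^ m) k := Coprime.pow_left _ (coprime_two_left.2 hko)
  have htwo := two_mul_totient_two_pow (pow_ne_zero m two_ne_zero)
  rw [totient_mul_succ_mul_add_self hdvd hp1 hnd1,
    totient_mul_succ_mul (by positivity) hcop hp2 hnd2]
  linear_combination (r * ((2 ^ 2 ^ m + 1) * φ k)) * htwo.symm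

theorem fermat_prime_solution_odd_k_dvd
    (m k r : ℕ) (hF : Nat.Prime (2 ^ 2 ^ m + 1))
    (hk : 0 < k) (hko : Odd k) (hdvd : (2 ^ 2 ^ m + 1) ∣ k)
    (hr : 0 < r)
    (hp1 : Nat.Prime (2 ^ 2 ^ m * r + 1))
    (hp2 : Nat.Prime ((2 ^ 2 ^ m + 1) * r + 1))
    (hnd1 : ¬ (2 ^ 2 ^ m * r + 1) ∣ k)
    (hnd2 : ¬ ((2 ^ 2 ^ m + 1) * r + 1) ∣ k) :
    Nat.totient (2 ^ 2 ^ m * ((2 ^ 2 ^ m + 1) * r + 1) * k + k) =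
      2 * Nat.totient (2 ^ 2 ^ m * ((2 ^ 2 ^ m + 1) * r + 1) * k) :=
  fermat_prime_solution_odd_k_dvd_general m k r hko hdvd hp1 hp2 hnd1 hnd2
end

section
/- Let m be a nonnegative integer such that the Fermat number F_m = 2^(2^m) + 1 is prime, and let k be an even positive integer divisible by F_m. If there are infinitely many positive integers r such that both (F_m − 1)·r + 1 and F_m·r + 1 are prime and neither of them divides k, then there are infinitely many positive integers n with φ(n+k) = φ(n), where φ denotes Euler's totient function. -/
lemma totient_two_pow_mul (e k : ℕ) (hk : 2 ∣ k) :
    Nat.totient (2 ^ e * k) = 2 ^ e * Nat.totient k := by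
  induction e with
  | zero => simp
  | succ e ih =>
    have h2 : (2 : ℕ) ∣ 2 ^ e * k := Dvd.dvd.mul_left hk _
    calc Nat.totient (2 ^ (e + 1) * k) = Nat.totient (2 * (2 ^ e * k)) := by ring_nf
      _ = 2 * Nat.totient (2 ^ e * k) :=
        Nat.totient_mul_of_prime_of_dvd Nat.prime_two h2
      _ = 2 ^ (e + 1) * Nat.totient k := by rw [ih]; ring

theorem fermat_prime_infinitely_many_solutions_even_k
    (m k : ℕ) (hF : Nat.Prime (2 ^ 2 ^ m + 1))
    (hk : 0 < k) (hke : Even k) (hdvd : (2 ^ 2 ^ m + 1) ∣ k)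
    (hinf : {r : ℕ | 0 < r ∧ Nat.Prime (2 ^ 2 ^ m * r + 1) ∧
        Nat.Prime ((2 ^ 2 ^ m + 1) * r + 1) ∧
        ¬ (2 ^ 2 ^ m * r + 1) ∣ k ∧
        ¬ ((2 ^ 2 ^ m + 1) * r + 1) ∣ k}.Infinite) :
    {n : ℕ | 0 < n ∧ Nat.totient (n + k) = Nat.totient n}.Infinite := by
  set e : ℕ := 2 ^ m with he
  set F : ℕ := 2 ^ e + 1 with hFdef
  have h2k : (2 : ℕ) ∣ k := hke.two_dvd
  -- the map r ↦ 2^e * k * (F*r+1)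
  have hinj : Function.Injective (fun r : ℕ => 2 ^ e * k * (F * r + 1)) :=
    fun a b hab => by
      have h1 : 0 < 2 ^ e * k := Nat.mul_pos (pow_pos two_pos e) hk
      have h2 : 0 < F := by positivity
      simp only at hab
      have := Nat.eq_of_mul_eq_mul_left h1 hab
      have := Nat.succ_injective this
      exact Nat.eq_of_mul_eq_mul_left h2 this
  have himg := (hinf.image hinj.injOn)
  refine himg.mono ?_
  rintro n ⟨r, ⟨hr, hp, hq, hpk, hqk⟩, rfl⟩
  simp only [Set.mem_setOf_eq]
  set p : ℕ := 2 ^ e * r + 1 with hpdef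
  set q : ℕ := F * r + 1 with hqdef
  have hnpos : 0 < 2 ^ e * k * q := by positivity
  refine ⟨hnpos, ?_⟩
  -- key identity : n + k = F * k * p
  have hid : 2 ^ e * k * q + k = F * k * p := by
    rw [hqdef, hpdef, hFdef]; ring
  rw [hid]
  -- q does not divide 2^e * k
  have hq4 : 4 ≤ q := by
    have hF3 : 3 ≤ F := by
      have : 1 ≤ e := Nat.one_le_two_pow
      have : 2 ≤ 2 ^ e := by calc 2 = 2 ^ 1 := rfl
                                 _ ≤ 2 ^ e := Nat.pow_le_pow_right two_pos this
      omega
    have : F * 1 ≤ F * r := Nat.mul_le_mul_left F hr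
    omega
  have hqodd : ¬ (2 : ℕ) ∣ q := by
    intro h
    have := (Nat.prime_dvd_prime_iff_eq Nat.prime_two hq).mp h
    omega
  have hq2ek : ¬ q ∣ 2 ^ e * k := by
    intro h
    rcases (Nat.Prime.dvd_mul hq).mp h with h | h
    · exact hqodd ((Nat.prime_dvd_prime_iff_eq hq Nat.prime_two).mp
        (hq.dvd_of_dvd_pow h) ▸ dvd_refl q)
    · exact hqk h
  -- p does not divide F * k
  have hpFk : ¬ p ∣ F * k := by
    intro h
    rcases (Nat.Prime.dvd_mul hp).mp h with h | h
    · have := (Nat.prime_dvd_prime_iff_eq hp hF).mp h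
      exact hpk (this ▸ hdvd)
    · exact hpk h
  -- compute totients
  have hco1 : Nat.Coprime q (2 ^ e * k) := (Nat.Prime.coprime_iff_not_dvd hq).mpr hq2ek
  have hco2 : Nat.Coprime p (F * k) := (Nat.Prime.coprime_iff_not_dvd hp).mpr hpFk
  have ht1 : Nat.totient (2 ^ e * k * q) = (q - 1) * (2 ^ e * Nat.totient k) := by
    rw [mul_comm (2 ^ e * k) q, Nat.totient_mul hco1, Nat.totient_prime hq,
      totient_two_pow_mul e k h2k]
  have ht2 : Nat.totient (F * k * p) = (p - 1) * (F * Nat.totient k) := by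
    rw [mul_comm (F * k) p, Nat.totient_mul hco2, Nat.totient_prime hp,
      Nat.totient_mul_of_prime_of_dvd hF hdvd]
  rw [ht1, ht2]
  have hq1 : q - 1 = F * r := by rw [hqdef]; omega
  have hp1 : p - 1 = 2 ^ e * r := by rw [hpdef]; omega
  rw [hq1, hp1]; ring
end

section
/- Let m be a nonnegative integer such that the Fermat number F_m = 2^(2^m) + 1 is prime, and let k be an odd positive integer divisible by F_m. If there are infinitely many positive integers r such that both (F_m − 1)·r + 1 and F_m·r + 1 are prime and neither of them divides k, then there are infinitely many positive integers n with φ(n+k) = 2·φ(n), where φ denotes Euler's totient function. -/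
theorem fermat_prime_infinitely_many_solutions_odd_k
    (m k : ℕ) (hF : Nat.Prime (2 ^ 2 ^ m + 1))
    (hk : 0 < k) (hko : Odd k) (hdvd : (2 ^ 2 ^ m + 1) ∣ k)
    (hinf : {r : ℕ | 0 < r ∧ Nat.Prime (2 ^ 2 ^ m * r + 1) ∧
        Nat.Prime ((2 ^ 2 ^ m + 1) * r + 1) ∧
        ¬ (2 ^ 2 ^ m * r + 1) ∣ k ∧
        ¬ ((2 ^ 2 ^ m + 1) * r + 1) ∣ k}.Infinite) :
    {n : ℕ | 0 < n ∧ Nat.totient (n + k) = 2 * Nat.totient n}.Infinite := by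
  set a : ℕ := 2 ^ 2 ^ m with ha
  have ha2 : 2 ≤ a := by
    have : 2 ^ 1 ≤ 2 ^ 2 ^ m := Nat.pow_le_pow_right (by norm_num) (Nat.one_le_two_pow)
    simpa using this
  set S : Set ℕ := {r : ℕ | 0 < r ∧ Nat.Prime (a * r + 1) ∧
      Nat.Prime ((a + 1) * r + 1) ∧ ¬ (a * r + 1) ∣ k ∧ ¬ ((a + 1) * r + 1) ∣ k} with hS
  have hmono : StrictMono (fun r : ℕ => a * k * ((a + 1) * r + 1)) := by
    intro x y hxy
    have hak : 0 < a * k := by positivity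
    simp only []
    gcongr
  have himg : ((fun r : ℕ => a * k * ((a + 1) * r + 1)) '' S).Infinite :=
    hinf.image (hmono.injective.injOn)
  refine himg.mono ?_
  rintro n ⟨r, ⟨hr, hq, hp, hqk, hpk⟩, rfl⟩
  refine ⟨by positivity, ?_⟩
  show Nat.totient (a * k * ((a + 1) * r + 1) + k) = 2 * Nat.totient (a * k * ((a + 1) * r + 1))
  -- key facts
  have hpodd : Odd ((a + 1) * r + 1) := by
    refine hp.odd_of_ne_two ?_
    have : (a + 1) * r ≥ 3 := by nlinarith
    omega
  -- n + k = (a*r+1) * ((a+1) * k)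
  have hsum : a * k * ((a + 1) * r + 1) + k = (a * r + 1) * ((a + 1) * k) := by ring
  rw [hsum]
  -- coprimality for n + k
  have hqF : ¬ (a * r + 1) ∣ (a + 1) := by
    intro h
    have := (Nat.prime_dvd_prime_iff_eq hq hF).mp h
    exact hqk (this ▸ hdvd)
  have hcop1 : Nat.Coprime (a * r + 1) ((a + 1) * k) := by
    rw [Nat.Prime.coprime_iff_not_dvd hq]
    intro h
    rcases (Nat.Prime.dvd_mul hq).mp h with h' | h'
    · exact hqF h'
    · exact hqk h'
  rw [Nat.totient_mul hcop1, Nat.totient_prime hq,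
    Nat.totient_mul_of_prime_of_dvd hF hdvd]
  -- totient of n
  have hkp_odd : Odd (k * ((a + 1) * r + 1)) := hko.mul hpodd
  have hcop2 : Nat.Coprime a (k * ((a + 1) * r + 1)) := by
    rw [ha]
    exact Nat.Coprime.pow_left _ (by
      rw [Nat.coprime_two_left]
      exact hkp_odd)
  have hcop3 : Nat.Coprime k ((a + 1) * r + 1) :=
    ((Nat.Prime.coprime_iff_not_dvd hp).mpr hpk).symm
  have hn : a * k * ((a + 1) * r + 1) = a * (k * ((a + 1) * r + 1)) := by ring
  rw [hn, Nat.totient_mul hcop2, Nat.totient_mul hcop3, Nat.totient_prime hp]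
  -- totient of a = 2^(2^m)
  have hta : Nat.totient a = 2 ^ (2 ^ m - 1) := by
    rw [ha, Nat.totient_prime_pow Nat.prime_two (Nat.pow_pos (n := m) (by norm_num))]
    simp
  have h2a : 2 * 2 ^ (2 ^ m - 1) = a := by
    rw [ha, ← pow_succ']
    congr 1
    have : (0:ℕ) < 2 ^ m := Nat.pow_pos (n := m) (by norm_num)
    omega
  rw [hta]
  have : (a * r + 1 - 1) = a * r := by omega
  rw [this]
  have hpm1 : ((a + 1) * r + 1 - 1) = (a + 1) * r := by omega
  rw [hpm1]
  calc a * r * ((a + 1) * Nat.totient k)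
      = (2 * 2 ^ (2 ^ m - 1)) * r * ((a + 1) * Nat.totient k) := by rw [h2a]
    _ = 2 * (2 ^ (2 ^ m - 1) * (Nat.totient k * ((a + 1) * r))) := by ring
end

section
/- Let k be an even positive integer and let a be a positive integer such that: p = 2a + 1 is prime, p does not divide k, (a + 1) divides k, and every prime factor of a divides k. Then n = a·k/(a+1) is a positive integer satisfying φ(n+k) = 2·φ(n), where φ denotes Euler's totient function. -/
/-!
Write k = (a + 1) m, so that n = a m and n + k = (2a + 1) m. Since the prime 2a + 1 does not
divide m, φ(n + k) = 2a · φ(m). Since a is coprime to a + 1, every prime factor of a divides m,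
so m and a m have the same prime factors and φ(a m) = a · φ(m).
-/

theorem Nat.totient_mul_of_forall_prime_dvd {a m : ℕ} (h : ∀ p : ℕ, p.Prime → p ∣ a → p ∣ m) :
    (a * m).totient = a * m.totient := by
  rcases eq_or_ne a 0 with rfl | ha
  · simp
  rcases eq_or_ne m 0 with rfl | hm
  · simp
  have hfactors : (a * m).primeFactors = m.primeFactors := by
    refine (primeFactors_mul ha hm).trans (Finset.union_eq_right.mpr fun p hp => ?_)
    have hp' := prime_of_mem_primeFactors hp
    exact mem_primeFactors.mpr ⟨hp', h p hp' (dvd_of_mem_primeFactors hp), hm⟩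
  rw [totient_eq_div_primeFactors_mul, totient_eq_div_primeFactors_mul m, hfactors,
    Nat.mul_div_assoc a (prod_primeFactors_dvd m), mul_assoc]

theorem prime_sequence_construction_general
    (k a : ℕ) (hk : 0 < k) (ha : 0 < a)
    (hp : Nat.Prime (2 * a + 1)) (hpk : ¬ (2 * a + 1) ∣ k)
    (hdvd : (a + 1) ∣ k)
    (hfac : ∀ p : ℕ, p.Prime → p ∣ a → p ∣ k) :
    0 < a * k / (a + 1) ∧
    Nat.totient (a * k / (a + 1) + k) = 2 * Nat.totient (a * k / (a + 1)) := by
  obtain ⟨m, rfl⟩ := hdvd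
  have hm : 0 < m := Nat.pos_of_mul_pos_left hk
  have hn : a * ((a + 1) * m) / (a + 1) = a * m := by
    rw [Nat.mul_left_comm, Nat.mul_div_cancel_left _ a.succ_pos]
  have hsum : a * m + (a + 1) * m = (2 * a + 1) * m := by ring
  have hcop : (2 * a + 1).Coprime m := hp.coprime_iff_not_dvd.mpr fun h => hpk (h.mul_left _)
  have ha_cop : a.Coprime (a + 1) := Nat.coprime_self_add_right.mpr (Nat.coprime_one_right a)
  have hfac_m : ∀ p : ℕ, p.Prime → p ∣ a → p ∣ m := fun p hp hpa =>
    (ha_cop.coprime_dvd_left hpa).dvd_of_dvd_mul_left (hfac p hp hpa)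
  rw [hn, hsum]
  refine ⟨by positivity, ?_⟩
  rw [Nat.totient_mul hcop, Nat.totient_prime hp, Nat.add_sub_cancel,
    Nat.totient_mul_of_forall_prime_dvd hfac_m, mul_assoc]

theorem prime_sequence_construction
    (k a : ℕ) (hk : 0 < k) (hke : Even k) (ha : 0 < a)
    (hp : Nat.Prime (2 * a + 1)) (hpk : ¬ (2 * a + 1) ∣ k)
    (hdvd : (a + 1) ∣ k)
    (hfac : ∀ p : ℕ, p.Prime → p ∣ a → p ∣ k) :
    0 < a * k / (a + 1) ∧
    Nat.totient (a * k / (a + 1) + k) = 2 * Nat.totient (a * k / (a + 1)) :=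
  prime_sequence_construction_general k a hk ha hp hpk hdvd hfac
end

section
/- Let k be an odd positive integer, and let j be a positive integer such that j and 2j + k have exactly the same set of prime factors. Set g = gcd(j, 2j + k), and let r be a positive integer such that (2j/g)·r + 1 and ((2j+k)/g)·r + 1 are both prime and both coprime to k. Then n = 2j·(((2j+k)/g)·r + 1) satisfies φ(n+k) = 2·φ(n), where φ denotes Euler's totient function. -/
/-!
Put `m = 2j + k`, `g = gcd(j, m)`, `p₁ = (2j/g)·r + 1`, `p₂ = (m/g)·r + 1` and `n = 2j·p₂`.
Since `2j·(m/g) = m·(2j/g)`, we get `n + k = m·p₁`. A prime dividing both `j` and `m` divides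
`k`, so the coprimality assumptions keep `p₁` out of `m` and `p₂` out of `2j`, and (for
`p = 2`) force `j` to be odd. Hence `φ(n + k) = φ(m)·(2j/g)·r` and `φ(n) = φ(j)·(m/g)·r`.
As `j` and `m` have the same prime factors, `φ(m)/m = φ(j)/j`, which makes the first value
twice the second.
-/

open Nat

theorem Nat.totient_mul_eq_totient_mul_of_primeFactors_eq {a b : ℕ}
    (h : a.primeFactors = b.primeFactors) : φ a * b = φ b * a := by
  have ha := totient_mul_prod_primeFactors a
  have hb := totient_mul_prod_primeFactors b
  rw [h] at ha
  have hP : 0 < ∏ p ∈ b.primeFactors, p :=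
    Finset.prod_pos fun p hp => (prime_of_mem_primeFactors hp).pos
  apply Nat.eq_of_mul_eq_mul_right hP
  calc φ a * b * ∏ p ∈ b.primeFactors, p = a * (∏ p ∈ b.primeFactors, (p - 1)) * b := by
        rw [mul_right_comm, ha]
    _ = φ b * a * ∏ p ∈ b.primeFactors, p := by
        rw [mul_right_comm (φ b), hb]; ring

theorem Nat.primeFactors_eq_of_prime_dvd_iff {a b : ℕ} (ha : a ≠ 0) (hb : b ≠ 0)
    (h : ∀ p : ℕ, p.Prime → (p ∣ a ↔ p ∣ b)) : a.primeFactors = b.primeFactors := by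
  ext p
  simp only [mem_primeFactors, ha, hb, ne_eq, not_false_eq_true, and_true]
  exact and_congr_right (h p)

theorem Nat.mul_div_eq_mul_div_of_mul_eq {u v x y g : ℕ} (h : u * x = v * y) (hx : g ∣ x)
    (hy : g ∣ y) : u * (x / g) = v * (y / g) := by
  rw [← Nat.mul_div_assoc u hx, ← Nat.mul_div_assoc v hy, h]

theorem Nat.mul_add_eq_add_mul_of_dvd {x k g : ℕ} (r : ℕ) (hx : g ∣ x) (hxk : g ∣ x + k) :
    x * ((x + k) / g * r + 1) + k = (x + k) * (x / g * r + 1) := by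
  have hswap := mul_div_eq_mul_div_of_mul_eq (mul_comm x (x + k)) hxk hx
  calc x * ((x + k) / g * r + 1) + k = x * ((x + k) / g) * r + (x + k) := by ring
    _ = (x + k) * (x / g) * r + (x + k) := by rw [hswap]
    _ = (x + k) * (x / g * r + 1) := by ring

theorem Nat.Prime.not_dvd_of_dvd_iff_dvd_mul_add {p c j k : ℕ} (hp : p.Prime)
    (hpk : Coprime p k) (h : p ∣ j ↔ p ∣ c * j + k) : ¬ p ∣ j := fun hpj =>
  hp.coprime_iff_not_dvd.mp hpk <| (Nat.dvd_add_right (dvd_mul_of_dvd_right hpj c)).mp (h.mp hpj)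

theorem Nat.div_gcd_ne_one {j m : ℕ} (hj : 0 < j) (hjm : j < m) : m / gcd j m ≠ 1 := by
  intro h
  have hm := Nat.div_mul_cancel (gcd_dvd_right j m)
  rw [h, one_mul] at hm
  have := Nat.le_of_dvd hj (gcd_dvd_left j m)
  omega

theorem modified_GHP_lemma_general
    (k j r : ℕ) (hko : Odd k) (hj : 0 < j)
    (hsame : ∀ p : ℕ, p.Prime → (p ∣ j ↔ p ∣ (2 * j + k)))
    (hp1 : Nat.Prime ((2 * j / Nat.gcd j (2 * j + k)) * r + 1))
    (hp2 : Nat.Prime (((2 * j + k) / Nat.gcd j (2 * j + k)) * r + 1))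
    (hc1 : Nat.Coprime ((2 * j / Nat.gcd j (2 * j + k)) * r + 1) k)
    (hc2 : Nat.Coprime (((2 * j + k) / Nat.gcd j (2 * j + k)) * r + 1) k) :
    Nat.totient (2 * j * (((2 * j + k) / Nat.gcd j (2 * j + k)) * r + 1) + k) =
      2 * Nat.totient (2 * j * (((2 * j + k) / Nat.gcd j (2 * j + k)) * r + 1)) := by
  set m := 2 * j + k
  set g := Nat.gcd j m
  have hgj : g ∣ j := Nat.gcd_dvd_left j m
  have hgm : g ∣ m := Nat.gcd_dvd_right j m
  have hj_odd : Odd j := Nat.odd_iff.mpr <| Nat.two_dvd_ne_zero.mp <|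
    prime_two.not_dvd_of_dvd_iff_dvd_mul_add (coprime_two_left.mpr hko) (hsame 2 prime_two)
  have hp1m : ¬ 2 * j / g * r + 1 ∣ m := fun h =>
    hp1.not_dvd_of_dvd_iff_dvd_mul_add hc1 (hsame _ hp1) ((hsame _ hp1).mpr h)
  have hp2j : ¬ m / g * r + 1 ∣ 2 * j := by
    intro h
    rcases hp2.dvd_mul.mp h with h2 | hpj
    · have hmr : m / g * r = 1 := by
        have := (prime_dvd_prime_iff_eq hp2 prime_two).mp h2; omega
      exact div_gcd_ne_one hj (by omega) (Nat.eq_one_of_mul_eq_one_right hmr)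
    · exact hp2.not_dvd_of_dvd_iff_dvd_mul_add hc2 (hsame _ hp2) hpj
  have hrad : φ m * (2 * j) = 2 * φ j * m := by
    have := totient_mul_eq_totient_mul_of_primeFactors_eq
      (primeFactors_eq_of_prime_dvd_iff (by omega) hj.ne' fun p hp => (hsame p hp).symm)
    rw [← mul_assoc, mul_right_comm, this]; ring
  have hφ := mul_div_eq_mul_div_of_mul_eq hrad (dvd_mul_of_dvd_right hgj 2) hgm
  rw [mul_add_eq_add_mul_of_dvd r (dvd_mul_of_dvd_right hgj 2) hgm,
    totient_mul ((hp1.coprime_iff_not_dvd.mpr hp1m).symm),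
    totient_mul ((hp2.coprime_iff_not_dvd.mpr hp2j).symm), totient_two_mul_of_odd hj_odd,
    totient_prime hp1, totient_prime hp2, Nat.add_sub_cancel, Nat.add_sub_cancel, ← mul_assoc,
    hφ]
  ring

theorem modified_GHP_lemma
    (k j r : ℕ) (hk : 0 < k) (hko : Odd k) (hj : 0 < j)
    (hsame : ∀ p : ℕ, p.Prime → (p ∣ j ↔ p ∣ (2 * j + k)))
    (hr : 0 < r)
    (hp1 : Nat.Prime ((2 * j / Nat.gcd j (2 * j + k)) * r + 1))
    (hp2 : Nat.Prime (((2 * j + k) / Nat.gcd j (2 * j + k)) * r + 1))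
    (hc1 : Nat.Coprime ((2 * j / Nat.gcd j (2 * j + k)) * r + 1) k)
    (hc2 : Nat.Coprime (((2 * j + k) / Nat.gcd j (2 * j + k)) * r + 1) k) :
    Nat.totient (2 * j * (((2 * j + k) / Nat.gcd j (2 * j + k)) * r + 1) + k) =
      2 * Nat.totient (2 * j * (((2 * j + k) / Nat.gcd j (2 * j + k)) * r + 1)) :=
  modified_GHP_lemma_general k j r hko hj hsame hp1 hp2 hc1 hc2
end

section
/- Let k be a positive integer and p a prime such that 2p − 1 is also prime, gcd(p, k) = 1, gcd(2p − 1, k) = 1, and (p − 1) divides k. Then n = p·k/(p−1) is a positive integer satisfying φ(n+k) = 2·φ(n), where φ denotes Euler's totient function. -/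
/-! Write `k = (p - 1) m`. Then `n = p m` and `n + k = (2p - 1) m`, with `m` coprime to both primes
`p` and `2p - 1`, so `φ (n + k) = (2p - 2) φ m = 2 (p - 1) φ m = 2 φ n`. -/

theorem Nat.totient_two_mul_sub_one_mul_eq_two_mul_totient_mul {p m : ℕ} (hp : p.Prime)
    (hq : (2 * p - 1).Prime) (hpm : ¬p ∣ m) (hqm : ¬(2 * p - 1) ∣ m) :
    ((2 * p - 1) * m).totient = 2 * (p * m).totient := by
  rw [Nat.totient_mul_of_prime_of_not_dvd hq hqm, Nat.totient_mul_of_prime_of_not_dvd hp hpm,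
    show 2 * p - 1 - 1 = 2 * (p - 1) by omega, mul_assoc]

theorem prime_p_two_p_sub_one_solution
    (k p : ℕ) (hk : 0 < k) (hp : Nat.Prime p) (hp2 : Nat.Prime (2 * p - 1))
    (hc1 : Nat.gcd p k = 1) (hc2 : Nat.gcd (2 * p - 1) k = 1)
    (hdvd : (p - 1) ∣ k) :
    0 < p * k / (p - 1) ∧
    Nat.totient (p * k / (p - 1) + k) = 2 * Nat.totient (p * k / (p - 1)) := by
  obtain ⟨m, rfl⟩ := hdvd
  have hm : 0 < m := Nat.pos_of_mul_pos_left hk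
  have hn : p * ((p - 1) * m) / (p - 1) = p * m := by
    rw [mul_left_comm, Nat.mul_div_cancel_left _ (Nat.sub_pos_of_lt hp.one_lt)]
  have hnk : p * m + (p - 1) * m = (2 * p - 1) * m := by
    rw [← add_mul, show p + (p - 1) = 2 * p - 1 by omega]
  have hmk : m ∣ (p - 1) * m := dvd_mul_left m (p - 1)
  have hpm : ¬p ∣ m := hp.coprime_iff_not_dvd.1 (Nat.Coprime.coprime_dvd_right hmk hc1)
  have hqm : ¬(2 * p - 1) ∣ m :=
    hp2.coprime_iff_not_dvd.1 (Nat.Coprime.coprime_dvd_right hmk hc2)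
  rw [hn, hnk]
  exact ⟨Nat.mul_pos hp.pos hm,
    Nat.totient_two_mul_sub_one_mul_eq_two_mul_totient_mul hp hp2 hpm hqm⟩
end

section
/- Let k be an even positive integer and m a positive integer such that m divides k, gcd(m + 2, k) = 1, gcd(m + 4, k) = 1, and φ(m + 2) = φ(m + 4). Then n = (m + 4)·k/m is a positive integer satisfying φ(n+k) = 2·φ(n), where φ denotes Euler's totient function. -/
/-!
Write `k = m t`. Then `n = (m + 4) t` and `n + k = (m + 2) (2 t)`. Since `k` is even and coprime
to `m + 2`, the number `m + 2` is odd, hence so is `m`, and therefore `t` is even. As both `m + 2`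
and `m + 4` are coprime to `k`, multiplicativity gives
`φ(n + k) = φ(m + 2) φ(2 t) = 2 φ(m + 2) φ(t) = 2 φ(m + 4) φ(t) = 2 φ(n)`.
-/

open Nat

theorem Nat.totient_mul_two_mul_eq_two_mul_totient_mul {a b t : ℕ} (hab : φ a = φ b)
    (ha : a.Coprime (2 * t)) (hb : b.Coprime t) (ht : Even t) :
    φ (a * (2 * t)) = 2 * φ (b * t) := by
  rw [totient_mul ha, totient_mul hb, totient_two_mul_of_even ht, hab]
  ring

theorem m_plus_two_m_plus_four_solution
    (k m : ℕ) (hk : 0 < k) (hke : Even k) (hm : 0 < m)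
    (hdvd : m ∣ k) (hc1 : Nat.gcd (m + 2) k = 1) (hc2 : Nat.gcd (m + 4) k = 1)
    (hphi : Nat.totient (m + 2) = Nat.totient (m + 4)) :
    0 < (m + 4) * k / m ∧
    Nat.totient ((m + 4) * k / m + k) = 2 * Nat.totient ((m + 4) * k / m) := by
  obtain ⟨t, rfl⟩ := hdvd
  have ht : 0 < t := pos_of_mul_pos_right hk m.zero_le
  have hn : (m + 4) * (m * t) / m = (m + 4) * t := by
    rw [mul_left_comm, Nat.mul_div_cancel_left _ hm]
  have hodd : Odd (m + 2) := (Coprime.coprime_dvd_right hke.two_dvd hc1).odd_of_right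
  have hmodd : Odd m := (Nat.odd_add.mp hodd).mpr even_two
  have hteven : Even t := (even_mul.mp hke).resolve_left (not_even_iff_odd.mpr hmodd)
  refine ⟨by rw [hn]; positivity, ?_⟩
  rw [hn, show (m + 4) * t + m * t = (m + 2) * (2 * t) by ring]
  exact totient_mul_two_mul_eq_two_mul_totient_mul hphi
    (hodd.coprime_two_right.mul_right (Coprime.coprime_dvd_right (dvd_mul_left t m) hc1))
    (Coprime.coprime_dvd_right (dvd_mul_left t m) hc2) hteven
end

section
/- Let k be a positive integer divisible by 2, 3, 5 and 11, and coprime to 7 and to 13. Then n = 36·k/55 is a positive integer satisfying φ(n+k) = 2·φ(n), where φ denotes Euler's totient function. -/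
/-!
Write `k = 330 m`, so that `n = 216 m = 36 · 6m` and `n + k = 546 m = 91 · 6m`. Every prime factor
of `36` divides `6m`, so `φ n = 36 φ(6m)`; and `7, 13 ∤ k` make `91` coprime to `6m`, so
`φ(n + k) = φ 91 · φ(6m) = 72 φ(6m)`.
-/

open Nat

theorem Nat.totient_mul_of_primeFactors_subset {a b : ℕ} (h : a.primeFactors ⊆ b.primeFactors) :
    φ (a * b) = a * φ b := by
  rcases eq_or_ne a 0 with rfl | ha
  · simp
  rcases eq_or_ne b 0 with rfl | hb
  · simp
  have hpf : (a * b).primeFactors = b.primeFactors := by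
    rw [primeFactors_mul ha hb, Finset.union_eq_right.2 h]
  apply Nat.eq_of_mul_eq_mul_right (Finset.prod_pos fun p hp => (prime_of_mem_primeFactors hp).pos)
  rw [← hpf, totient_mul_prod_primeFactors, hpf, mul_assoc, mul_assoc, totient_mul_prod_primeFactors]

theorem special_solution_36_55
    (k : ℕ) (hk : 0 < k)
    (h2 : 2 ∣ k) (h3 : 3 ∣ k) (h5 : 5 ∣ k) (h11 : 11 ∣ k)
    (h7 : Nat.Coprime 7 k) (h13 : Nat.Coprime 13 k) :
    0 < 36 * k / 55 ∧
    Nat.totient (36 * k / 55 + k) = 2 * Nat.totient (36 * k / 55) := by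
  obtain ⟨m, rfl⟩ : 330 ∣ k := by omega
  have hn : 36 * (330 * m) / 55 = 36 * (6 * m) := by omega
  have hm : 6 * m ≠ 0 := by omega
  have hdvd : 6 * m ∣ 330 * m := ⟨55, by ring⟩
  have hcop : Coprime (7 * 13) (6 * m) :=
    (h7.coprime_dvd_right hdvd).mul_left (h13.coprime_dvd_right hdvd)
  have hpf : (36 : ℕ).primeFactors ⊆ (6 * m).primeFactors := by
    rw [show (36 : ℕ) = 6 ^ 2 by rfl, primeFactors_pow _ two_ne_zero]
    exact primeFactors_mono (dvd_mul_right 6 m) hm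
  have h91 : φ (7 * 13) = 72 := by
    rw [totient_mul (by norm_num), totient_prime (by norm_num), totient_prime (by norm_num)]
  rw [hn, show 36 * (6 * m) + 330 * m = 7 * 13 * (6 * m) by ring, totient_mul hcop, h91,
    totient_mul_of_primeFactors_subset hpf]
  exact ⟨by omega, by ring⟩
end
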